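/- arXiv:1811.02878 — 2 statements merged into one kernel-verified Lean document; each statement's English description precedes it below -/
import Mathlib

section
/- For each $\beta\in[0,\infty)$, $s\in(1,\infty)$, and any cube $Q\subset\mathbb{R}^d$, the Luxemburg norm satisfies $\|f\|_{L(\log L)^{\beta},Q} \le C\Big(1+\big(\frac{\beta}{s-1}\big)^{\beta}\Big)\Big(\frac{1}{|Q|}\int_Q |f|^s\Big)^{1/s}$, with $C$ depending only on $\beta$ (and not on $s$, $Q$, $f$). -/
open MeasureTheory ENNReal Filter Set

noncomputable section

namespace Rough

abbrev Ed (d : ℕ) := EuclideanSpace ℝ (Fin d)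

structure Cube (d : ℕ) where
  center : Ed d
  halfside : ℝ
  halfside_pos : 0 < halfside

variable {d : ℕ}

def Cube.carrier (Q : Cube d) : Set (Ed d) :=
  {x | ∀ i, |x i - Q.center i| ≤ Q.halfside}

def Cube.dilate (Q : Cube d) (t : ℝ) (ht : 0 < t) : Cube d :=
  ⟨Q.center, t * Q.halfside, mul_pos ht Q.halfside_pos⟩

/-- Average of an `ℝ≥0∞`-valued function over a cube. -/
def lavg (Q : Cube d) (f : Ed d → ℝ≥0∞) : ℝ≥0∞ :=
  (volume Q.carrier)⁻¹ * ∫⁻ x in Q.carrier, f x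

/-- Hardy–Littlewood maximal operator over cubes, `ℝ≥0∞`-valued. -/
def maximal (f : Ed d → ℝ≥0∞) (x : Ed d) : ℝ≥0∞ :=
  ⨆ (Q : Cube d) (_ : x ∈ Q.carrier), lavg Q f

def Mabs (f : Ed d → ℝ) (x : Ed d) : ℝ≥0∞ :=
  maximal (fun y => ENNReal.ofReal |f y|) x

/-- `A₁` constant. -/
def A1Const (w : Ed d → ℝ) : ℝ≥0∞ :=
  ⨆ x : Ed d, Mabs w x / ENNReal.ofReal (w x)

/-- Fujii–Wilson `A∞` constant. -/
def AinfConst (w : Ed d → ℝ) : ℝ≥0∞ :=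
  ⨆ Q : Cube d,
    (∫⁻ x in Q.carrier, ENNReal.ofReal (w x))⁻¹ *
      ∫⁻ x in Q.carrier,
        maximal (Q.carrier.indicator fun y => ENNReal.ofReal (w y)) x

/-- Muckenhoupt `A_p` constant. -/
def ApConst (p : ℝ) (w : Ed d → ℝ) : ℝ≥0∞ :=
  ⨆ Q : Cube d,
    lavg Q (fun x => ENNReal.ofReal (w x)) *
      (lavg Q fun x => ENNReal.ofReal (w x ^ (-1 / (p - 1)))) ^ (p - 1)

/-- Localized Luxemburg norm `‖f‖_{L(log L)^β, Q}`. -/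
def luxNorm (β : ℝ) (Q : Cube d) (f : Ed d → ℝ) : ℝ :=
  sInf {t : ℝ | 0 < t ∧
    (∫⁻ x in Q.carrier,
      ENNReal.ofReal (|f x| / t * Real.log (Real.exp 1 + |f x| / t) ^ β))
      ≤ volume Q.carrier}

/-- Orlicz maximal operator `M_{L(log L)^β}`. -/
def MOrlicz (β : ℝ) (f : Ed d → ℝ) (x : Ed d) : ℝ≥0∞ :=
  ⨆ (Q : Cube d) (_ : x ∈ Q.carrier), ENNReal.ofReal (luxNorm β Q f)

def IsSparse (η : ℝ) (S : Set (Cube d)) : Prop :=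
  ∃ E : Cube d → Set (Ed d),
    (∀ Q ∈ S, MeasurableSet (E Q) ∧ E Q ⊆ Q.carrier ∧
      ENNReal.ofReal η * volume Q.carrier ≤ volume (E Q)) ∧
    S.Pairwise fun Q Q' => Disjoint (E Q) (E Q')

/-- Bilinear sparse form `𝓐_{S; L(log L)^β, L^r}(f, g)`. -/
def sparseForm (β r : ℝ) (S : Set (Cube d)) (f g : Ed d → ℝ) : ℝ≥0∞ :=
  ∑' Q : S, volume Q.1.carrier * ENNReal.ofReal (luxNorm β Q.1 f) *
    (lavg Q.1 fun x => ENNReal.ofReal (|g x| ^ r)) ^ (1 / r)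

def Sublinear (U : (Ed d → ℝ) → Ed d → ℝ) : Prop :=
  (∀ f g x, |U (f + g) x| ≤ |U f x| + |U g x|) ∧
    ∀ (c : ℝ) (f) (x), |U (c • f) x| = |c| * |U f x|

def LinearOp (U : (Ed d → ℝ) → Ed d → ℝ) : Prop :=
  (∀ f g, U (f + g) = U f + U g) ∧ ∀ (c : ℝ) (f), U (c • f) = c • U f

/-- `(L(log L)^β, L^r)`-bilinear sparse domination with bound `A`
(with `η`-sparse families). -/
def HasSparseDom (U : (Ed d → ℝ) → Ed d → ℝ) (β r η A : ℝ) : Prop :=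
  ∀ f : Ed d → ℝ, Measurable f → (∃ C, ∀ x, |f x| ≤ C) → HasCompactSupport f →
    ∃ S : Set (Cube d), IsSparse η S ∧
      ∀ g : Ed d → ℝ, Measurable g →
        ENNReal.ofReal |∫ x, g x * U f x| ≤ ENNReal.ofReal A * sparseForm β r S f g

def wMeasure (w : Ed d → ℝ) : Measure (Ed d) :=
  volume.withDensity fun x => ENNReal.ofReal (w x)

/-- Rough homogeneous singular integral, as a principal value. -/
def TOmega (Ω : Ed d → ℝ) (f : Ed d → ℝ) (x : Ed d) : ℝ :=
  limUnder (nhdsWithin (0:ℝ) (Set.Ioi 0)) fun ε =>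
    ∫ y in {y : Ed d | ε < dist x y}, Ω (x - y) / dist x y ^ d * f y

def HomZero (Ω : Ed d → ℝ) : Prop := ∀ t : ℝ, 0 < t → ∀ x, Ω (t • x) = Ω x

def MeanZero (Ω : Ed d → ℝ) : Prop :=
  ∫ x : Metric.sphere (0 : Ed d) 1, Ω x ∂(volume : Measure (Ed d)).toSphere = 0

/-- Grand maximal operator `𝓜_{T,r}`. -/
def grandM (T : (Ed d → ℝ) → Ed d → ℝ) (r : ℝ) (h : Ed d → ℝ) (x : Ed d) : ℝ≥0∞ :=
  ⨆ (Q : Cube d) (_ : x ∈ Q.carrier),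
    (lavg Q fun ξ =>
      ENNReal.ofReal |T (((Q.dilate 3 (by norm_num)).carrier)ᶜ.indicator h) ξ| ^ r) ^ (1 / r)

end Rough

/-!
Write `Φ(u) = u log^β (e + u)` and `K = 4^β (1 + (β / (s - 1))^β)`. For `u ≥ 1` one has
`log (e + u) ≤ 2 + log u` and `log u ≤ (β / (s - 1)) u^((s - 1) / β)`, whence `Φ(u) ≤ K u^s`;
as `Φ` is increasing, `Φ(u) ≤ K (1 + u^s)` for all `u ≥ 0`. Since `Φ(u) / u` is increasing,
`Φ(u) ≤ Φ(2Ku) / (2K) ≤ (1 + (2Ku)^s) / 2`. So if `t ≥ 2K (⨍_Q |f|^s)^(1/s)`, averaging over `Q`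
gives `⨍_Q Φ(|f| / t) ≤ 1`, i.e. `‖f‖_{L(log L)^β, Q} ≤ t`.
-/

lemma two_add_rpow_le {x β : ℝ} (hx : 0 ≤ x) (hβ : 0 ≤ β) :
    (2 + x) ^ β ≤ 4 ^ β * (1 + x ^ β) := by
  have hxβ : 0 ≤ x ^ β := Real.rpow_nonneg hx β
  rcases le_total x 2 with h | h
  · have : (2 + x) ^ β ≤ 4 ^ β := Real.rpow_le_rpow (by positivity) (by linarith) hβ
    nlinarith [Real.rpow_nonneg (by norm_num : (0:ℝ) ≤ 4) β]
  · calc (2 + x) ^ β ≤ (2 * x) ^ β := Real.rpow_le_rpow (by positivity) (by linarith) hβ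
      _ = 2 ^ β * x ^ β := Real.mul_rpow (by norm_num) hx
      _ ≤ 4 ^ β * x ^ β := by gcongr; norm_num
      _ ≤ 4 ^ β * (1 + x ^ β) := by gcongr; linarith

lemma log_exp_one_add_le {u : ℝ} (hu : 1 ≤ u) : Real.log (Real.exp 1 + u) ≤ 2 + Real.log u := by
  have he : 2 ≤ Real.exp 1 := by linarith [Real.add_one_le_exp 1]
  calc Real.log (Real.exp 1 + u) ≤ Real.log (Real.exp 2 * u) := by
        refine Real.log_le_log (by positivity) ?_
        rw [show (2 : ℝ) = 1 + 1 by norm_num, Real.exp_add]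
        nlinarith [mul_le_mul_of_nonneg_left hu (by linarith : 0 ≤ Real.exp 1)]
    _ = 2 + Real.log u := by rw [Real.log_mul (by positivity) (by positivity), Real.log_exp]

lemma two_add_log_rpow_le {u β s : ℝ} (hu : 1 ≤ u) (hβ : 0 ≤ β) (hs : 1 < s) :
    (2 + Real.log u) ^ β ≤ (2 + β / (s - 1)) ^ β * u ^ (s - 1) := by
  rcases hβ.eq_or_lt with rfl | hβ
  · simpa using Real.one_le_rpow hu (by linarith)
  set ε := (s - 1) / β
  have hε : 0 < ε := div_pos (by linarith) hβ
  have huε : 1 ≤ u ^ ε := Real.one_le_rpow hu hε.le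
  have hlog : 2 + Real.log u ≤ (2 + β / (s - 1)) * u ^ ε := by
    have := Real.log_le_rpow_div (x := u) (by linarith) hε
    rw [div_eq_inv_mul, show ε⁻¹ = β / (s - 1) from inv_div _ _] at this
    nlinarith [div_nonneg hβ.le (by linarith : (0:ℝ) ≤ s - 1)]
  calc (2 + Real.log u) ^ β ≤ ((2 + β / (s - 1)) * u ^ ε) ^ β :=
        Real.rpow_le_rpow (by linarith [Real.log_nonneg hu]) hlog hβ.le
    _ = (2 + β / (s - 1)) ^ β * u ^ (s - 1) := by
        rw [Real.mul_rpow (by positivity) (by positivity), ← Real.rpow_mul (by linarith)]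
        congr 2
        simp only [ε]
        field_simp

/-- The Young function `Φ_β(u) = u log^β (e + u)` of `L(log L)^β`. -/
def logOrlicz (β u : ℝ) : ℝ := u * Real.log (Real.exp 1 + u) ^ β

def logOrliczConst (β s : ℝ) : ℝ := 4 ^ β * (1 + (β / (s - 1)) ^ β)

lemma one_le_logOrliczConst {β s : ℝ} (hβ : 0 ≤ β) (hs : 1 < s) : 1 ≤ logOrliczConst β s := by
  have h4 : 1 ≤ (4 : ℝ) ^ β := Real.one_le_rpow (by norm_num) hβ
  have hX : 0 ≤ (β / (s - 1)) ^ β := Real.rpow_nonneg (div_nonneg hβ (by linarith)) β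
  unfold logOrliczConst
  nlinarith

lemma logOrlicz_le_of_one_le {u β s : ℝ} (hu : 1 ≤ u) (hβ : 0 ≤ β) (hs : 1 < s) :
    logOrlicz β u ≤ logOrliczConst β s * u ^ s := by
  have hlog : 0 ≤ Real.log (Real.exp 1 + u) := Real.log_nonneg (by linarith [Real.add_one_le_exp 1])
  calc logOrlicz β u ≤ u * (2 + Real.log u) ^ β := by
        unfold logOrlicz
        gcongr
        exact log_exp_one_add_le hu
    _ ≤ u * ((2 + β / (s - 1)) ^ β * u ^ (s - 1)) := by
        gcongr
        exact two_add_log_rpow_le hu hβ hs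
    _ = (2 + β / (s - 1)) ^ β * u ^ s := by
        rw [Real.rpow_sub (by linarith), Real.rpow_one]
        field_simp
    _ ≤ logOrliczConst β s * u ^ s := by
        unfold logOrliczConst
        gcongr
        exact two_add_rpow_le (div_nonneg hβ (by linarith)) hβ

lemma logOrlicz_monotoneOn (β : ℝ) (hβ : 0 ≤ β) : MonotoneOn (logOrlicz β) (Ici 0) := by
  intro u (hu : 0 ≤ u) v _ huv
  have he : 1 ≤ Real.exp 1 + u := by linarith [Real.add_one_le_exp 1]
  have hlog := Real.log_nonneg he
  unfold logOrlicz
  gcongr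

lemma logOrlicz_div_le {β u l : ℝ} (hβ : 0 ≤ β) (hu : 0 ≤ u) (hl : 1 ≤ l) :
    logOrlicz β (u / l) ≤ logOrlicz β u / l := by
  have hul : u / l ≤ u := div_le_self hu hl
  have he : 1 ≤ Real.exp 1 + u / l := by
    linarith [Real.add_one_le_exp 1, div_nonneg hu (zero_le_one.trans hl)]
  unfold logOrlicz
  rw [div_mul_eq_mul_div]
  gcongr
  exact Real.log_nonneg he

lemma logOrlicz_le_one_add_rpow {u β s : ℝ} (hu : 0 ≤ u) (hβ : 0 ≤ β) (hs : 1 < s) :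
    logOrlicz β u ≤ logOrliczConst β s * (1 + u ^ s) := by
  have hK : 0 ≤ logOrliczConst β s := zero_le_one.trans (one_le_logOrliczConst hβ hs)
  rcases le_total u 1 with hu1 | hu1
  · calc logOrlicz β u ≤ logOrlicz β 1 := logOrlicz_monotoneOn β hβ hu (mem_Ici.2 zero_le_one) hu1
      _ ≤ logOrliczConst β s * 1 ^ s :=
          logOrlicz_le_of_one_le le_rfl hβ hs
      _ ≤ logOrliczConst β s * (1 + u ^ s) := by
        gcongr
        rw [Real.one_rpow]
        linarith [Real.rpow_nonneg hu s]
  · calc logOrlicz β u ≤ logOrliczConst β s * u ^ s :=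
          logOrlicz_le_of_one_le hu1 hβ hs
      _ ≤ logOrliczConst β s * (1 + u ^ s) := by gcongr; linarith

lemma logOrlicz_le_half_one_add_rpow {u β s : ℝ} (hu : 0 ≤ u) (hβ : 0 ≤ β) (hs : 1 < s) :
    logOrlicz β u ≤ (1 + (2 * logOrliczConst β s * u) ^ s) / 2 := by
  set K := logOrliczConst β s
  have hK : 1 ≤ K := one_le_logOrliczConst hβ hs
  calc logOrlicz β u = logOrlicz β (2 * K * u / (2 * K)) := by field_simp
    _ ≤ logOrlicz β (2 * K * u) / (2 * K) := logOrlicz_div_le hβ (by positivity) (by linarith)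
    _ ≤ K * (1 + (2 * K * u) ^ s) / (2 * K) := by
        gcongr
        exact logOrlicz_le_one_add_rpow (by positivity) hβ hs
    _ = (1 + (2 * K * u) ^ s) / 2 := by field_simp

section
variable {α : Type*} [MeasurableSpace α]

lemma lintegral_logOrlicz_le (μ : Measure α) {β s : ℝ} (hβ : 0 ≤ β) (hs : 1 < s) {g : α → ℝ}
    (hg : ∀ x, 0 ≤ g x)
    (h : ∫⁻ x, ENNReal.ofReal ((2 * logOrliczConst β s * g x) ^ s) ∂μ ≤ μ univ) :
    ∫⁻ x, ENNReal.ofReal (logOrlicz β (g x)) ∂μ ≤ μ univ := by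
  set K := logOrliczConst β s
  have hK : 0 ≤ K := zero_le_one.trans (one_le_logOrliczConst hβ hs)
  have hpt : ∀ x, ENNReal.ofReal (logOrlicz β (g x)) ≤
      2⁻¹ * (1 + ENNReal.ofReal ((2 * K * g x) ^ s)) := fun x => by
    calc ENNReal.ofReal (logOrlicz β (g x)) ≤ ENNReal.ofReal ((1 + (2 * K * g x) ^ s) / 2) :=
          ENNReal.ofReal_le_ofReal (logOrlicz_le_half_one_add_rpow (hg x) hβ hs)
      _ = 2⁻¹ * (1 + ENNReal.ofReal ((2 * K * g x) ^ s)) := by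
          rw [ENNReal.ofReal_div_of_pos two_pos, ENNReal.ofReal_add zero_le_one
            (Real.rpow_nonneg (mul_nonneg (by linarith) (hg x)) s),
            ENNReal.ofReal_one, ENNReal.ofReal_ofNat, ENNReal.div_eq_inv_mul]
  calc ∫⁻ x, ENNReal.ofReal (logOrlicz β (g x)) ∂μ
      ≤ ∫⁻ x, 2⁻¹ * (1 + ENNReal.ofReal ((2 * K * g x) ^ s)) ∂μ := lintegral_mono hpt
    _ = 2⁻¹ * (μ univ + ∫⁻ x, ENNReal.ofReal ((2 * K * g x) ^ s) ∂μ) := by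
        rw [lintegral_const_mul' _ _ (by simp), lintegral_add_left measurable_const,
          lintegral_const, one_mul]
    _ ≤ 2⁻¹ * (μ univ + μ univ) := by gcongr
    _ = μ univ := by
        rw [← two_mul, ← mul_assoc, ENNReal.inv_mul_cancel two_ne_zero ofNat_ne_top, one_mul]

lemma lintegral_rpow_le_of_avg_le (μ : Measure α) (hμ₀ : μ univ ≠ 0) (hμ : μ univ ≠ ⊤)
    {f : α → ℝ} {c t s : ℝ} (hc : 0 ≤ c) (ht : 0 < t) (hs : 0 < s)
    (h : ENNReal.ofReal c * ((μ univ)⁻¹ * ∫⁻ x, ENNReal.ofReal (|f x| ^ s) ∂μ) ^ (1 / s)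
      ≤ ENNReal.ofReal t) :
    ∫⁻ x, ENNReal.ofReal ((c * (|f x| / t)) ^ s) ∂μ ≤ μ univ := by
  set I := ∫⁻ x, ENNReal.ofReal (|f x| ^ s) ∂μ
  have hpt : ∀ x, ENNReal.ofReal ((c * (|f x| / t)) ^ s)
      = (ENNReal.ofReal (t ^ s))⁻¹ * (ENNReal.ofReal (c ^ s) * ENNReal.ofReal (|f x| ^ s)) := by
    intro x
    rw [← ENNReal.ofReal_inv_of_pos (by positivity), ← ENNReal.ofReal_mul (by positivity),
      ← ENNReal.ofReal_mul (by positivity), ← Real.mul_rpow hc (abs_nonneg _),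
      ← Real.inv_rpow ht.le, ← Real.mul_rpow (by positivity) (by positivity)]
    congr 2
    field_simp
  have hpow := ENNReal.rpow_le_rpow h hs.le
  rw [ENNReal.mul_rpow_of_nonneg _ _ hs.le, ← ENNReal.rpow_mul, one_div_mul_cancel hs.ne',
    ENNReal.rpow_one, ENNReal.ofReal_rpow_of_nonneg hc hs.le,
    ENNReal.ofReal_rpow_of_nonneg ht.le hs.le, mul_left_comm,
    ENNReal.inv_mul_le_iff hμ₀ hμ] at hpow
  have hts : ENNReal.ofReal (t ^ s) ≠ 0 := (ENNReal.ofReal_pos.2 (Real.rpow_pos_of_pos ht s)).ne'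
  simp_rw [hpt]
  rw [lintegral_const_mul' _ _ (ENNReal.inv_ne_top.2 hts),
    lintegral_const_mul' _ _ ENNReal.ofReal_ne_top,
    ENNReal.inv_mul_le_iff hts ENNReal.ofReal_ne_top]
  exact hpow.trans_eq (mul_comm _ _)

end

namespace Rough

variable {d : ℕ}

lemma Cube.volume_carrier (Q : Cube d) :
    volume Q.carrier = ENNReal.ofReal (2 * Q.halfside) ^ d := by
  have hbox : Q.carrier = WithLp.ofLp ⁻¹'
      Icc (fun i => Q.center i - Q.halfside) (fun i => Q.center i + Q.halfside) := by
    ext x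
    simp only [Cube.carrier, mem_ofPred_eq, mem_preimage, mem_Icc, Pi.le_def, ← forall_and,
      abs_sub_le_iff]
    exact forall_congr' fun i => by constructor <;> intro h <;> constructor <;> linarith [h.1, h.2]
  rw [hbox, (PiLp.volume_preserving_ofLp (Fin d)).measure_preimage
    measurableSet_Icc.nullMeasurableSet, Real.volume_Icc_pi]
  simp [two_mul]

lemma Cube.volume_carrier_pos (Q : Cube d) : 0 < volume Q.carrier := by
  rw [Q.volume_carrier]
  exact ENNReal.pow_pos (ENNReal.ofReal_pos.2 (by linarith [Q.halfside_pos])) d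

lemma Cube.volume_carrier_lt_top (Q : Cube d) : volume Q.carrier < ⊤ := by
  rw [Q.volume_carrier]
  exact ENNReal.pow_lt_top ENNReal.ofReal_lt_top

lemma luxNorm_le_of_avg_rpow_le {β s t : ℝ} (hβ : 0 ≤ β) (hs : 1 < s) (ht : 0 < t)
    (Q : Cube d) (f : Ed d → ℝ)
    (h : ENNReal.ofReal (2 * logOrliczConst β s) *
        ((volume Q.carrier)⁻¹ * ∫⁻ x in Q.carrier, ENNReal.ofReal (|f x| ^ s)) ^ (1 / s)
      ≤ ENNReal.ofReal t) :
    luxNorm β Q f ≤ t := by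
  have hvol : (volume.restrict Q.carrier) univ = volume Q.carrier := Measure.restrict_apply_univ _
  have hK : 0 ≤ 2 * logOrliczConst β s := by linarith [one_le_logOrliczConst hβ hs]
  refine csInf_le ⟨0, fun _ hr => hr.1.le⟩ ⟨ht, ?_⟩
  rw [← hvol]
  refine lintegral_logOrlicz_le _ hβ hs (g := fun x => |f x| / t) (fun x => by positivity) ?_
  refine lintegral_rpow_le_of_avg_le _ ?_ ?_ hK ht (by linarith) ?_
  · rw [hvol]; exact (Q.volume_carrier_pos).ne'
  · rw [hvol]; exact (Q.volume_carrier_lt_top).ne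
  · rwa [hvol]

end Rough

open MeasureTheory ENNReal Rough in
theorem stmt4 (β : ℝ) (hβ : 0 ≤ β) :
    ∃ C : ℝ, 0 < C ∧
      ∀ (d : ℕ) (s : ℝ), 1 < s → ∀ (Q : Cube d) (f : Ed d → ℝ), Measurable f →
        ENNReal.ofReal (luxNorm β Q f) ≤
          ENNReal.ofReal (C * (1 + (β / (s - 1)) ^ β)) *
            ((volume Q.carrier)⁻¹ *
              ∫⁻ x in Q.carrier, ENNReal.ofReal (|f x| ^ s)) ^ (1 / s) := by
  refine ⟨2 * 4 ^ β, by positivity, fun d s hs Q f _ => ?_⟩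
  rw [show 2 * 4 ^ β * (1 + (β / (s - 1)) ^ β) = 2 * logOrliczConst β s by
    unfold logOrliczConst; ring]
  by_contra! hlt
  obtain ⟨t, -, hlt_t, ht_lt⟩ := ENNReal.lt_iff_exists_real_btwn.1 hlt
  have ht : 0 < t := ENNReal.ofReal_pos.1 (zero_le.trans_lt hlt_t)
  exact ht_lt.not_ge (ENNReal.ofReal_le_ofReal (luxNorm_le_of_avg_rpow_le hβ hs ht Q f hlt_t.le))
end
end

section
/- (Weak-type transfer for the truncated maximal operator $M_\tau$.) Let $\tau\in(0,1)$ and let $F$ be a nonnegative measurable function. Then for all $\lambda>0$, $\big|\{x: M_\tau F(x)>\lambda\}\big| \le \frac{C_{d,\tau}}{\lambda} \sup_{t\ge 2^{-1/\tau}\lambda} t\, \big|\{x: F(x)>t\}\big|$, where $M_\tau F=(M(F^\tau))^{1/\tau}$ and $M$ is the Hardy–Littlewood maximal operator. -/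
/-!
Write `t₀ = 2^(-1/τ) λ`, so that `2 t₀^τ = λ^τ`. Since `F^τ ≤ F^τ 1_{F > t₀} + t₀^τ`, the level set
`{M_τ F > λ} = {M(F^τ) > 2 t₀^τ}` lies in `{M(F^τ 1_{F > t₀}) > t₀^τ}`, and the weak (1,1) bound
for `M` (Vitali covering by balls, each containing one of the cubes that witness the maximal
function) controls its measure by `t₀^(-τ) ∫_{F > t₀} F^τ`. Cutting `{F > t₀}` into the dyadic
shells `{2^k t₀ < F ≤ 2^(k+1) t₀}` bounds that integral by `sup_{t ≥ t₀} t |{F > t}|` times the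
geometric series `∑ (2^(τ-1))^k`, which converges because `τ < 1`.
-/


open MeasureTheory ENNReal Filter Set

noncomputable section

open Metric Module

section Vitali

variable {E : Type*} [NormedAddCommGroup E] [NormedSpace ℝ E] [FiniteDimensional ℝ E]
  [MeasurableSpace E] [BorelSpace E] (μ : Measure E) [μ.IsAddHaarMeasure] (ν : Measure E)
  {s : Set E} {K : ℝ≥0∞}

theorem Vitali.measure_le_of_forall_closedBall_le_of_radius_le {R : ℝ}
    (h : ∀ x ∈ s, ∃ r ∈ Ioc 0 R, μ (closedBall x r) ≤ K * ν (closedBall x r)) :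
    μ s ≤ 4 ^ finrank ℝ E * K * ν univ := by
  choose! ρ hρ hμν using h
  obtain ⟨u, hus, hu_disj, hu_cover⟩ :=
    Vitali.exists_disjoint_subfamily_covering_enlargement_closedBall s id ρ R
      (fun x hx => (hρ x hx).2) 4 (by norm_num)
  simp only [id] at hu_disj hu_cover
  have hρu : ∀ b ∈ u, 0 < ρ b := fun b hb => (hρ b (hus hb)).1
  have hu_count : u.Countable := hu_disj.countable_of_nonempty_interior fun b hb =>
    (nonempty_ball.2 (hρu b hb)).mono ball_subset_interior_closedBall
  have hs_cover : s ⊆ ⋃ b ∈ u, closedBall b (4 * ρ b) := fun x hx => by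
    obtain ⟨b, hb, hxb⟩ := hu_cover x hx
    exact mem_biUnion hb (hxb (mem_closedBall_self (hρ x hx).1.le))
  calc μ s ≤ ∑' b : u, μ (closedBall b (4 * ρ b)) :=
        (measure_mono hs_cover).trans (measure_biUnion_le μ hu_count _)
    _ = ∑' b : u, 4 ^ finrank ℝ E * μ (closedBall b (ρ b)) := by
        refine tsum_congr fun b => ?_
        rw [Measure.addHaar_closedBall_mul μ _ (by norm_num) (hρu b b.2).le,
          Measure.addHaar_closedBall_center μ b (ρ b), ENNReal.ofReal_pow (by norm_num),
          ENNReal.ofReal_ofNat]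
    _ ≤ ∑' b : u, 4 ^ finrank ℝ E * (K * ν (closedBall b (ρ b))) :=
        ENNReal.tsum_le_tsum fun b => by gcongr; exact hμν b (hus b.2)
    _ = 4 ^ finrank ℝ E * K * ν (⋃ b ∈ u, closedBall b (ρ b)) := by
        rw [measure_biUnion hu_count hu_disj fun b _ => measurableSet_closedBall,
          ENNReal.tsum_mul_left, ENNReal.tsum_mul_left, mul_assoc]
    _ ≤ 4 ^ finrank ℝ E * K * ν univ := by gcongr; exact subset_univ _

theorem Vitali.measure_le_of_forall_closedBall_le
    (h : ∀ x ∈ s, ∃ r > 0, μ (closedBall x r) ≤ K * ν (closedBall x r)) :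
    μ s ≤ 4 ^ finrank ℝ E * K * ν univ := by
  let t : ℕ → Set E := fun N =>
    {x ∈ s | ∃ r ∈ Ioc 0 (N : ℝ), μ (closedBall x r) ≤ K * ν (closedBall x r)}
  have ht : Monotone t := fun M N hMN x ⟨hx, r, hr, hxr⟩ =>
    ⟨hx, r, ⟨hr.1, hr.2.trans (by exact_mod_cast hMN)⟩, hxr⟩
  have hs : s ⊆ ⋃ N, t N := fun x hx => by
    obtain ⟨r, hr, hxr⟩ := h x hx
    obtain ⟨N, hN⟩ := exists_nat_ge r
    exact mem_iUnion.2 ⟨N, hx, r, ⟨hr, hN⟩, hxr⟩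
  calc μ s ≤ ⨆ N, μ (t N) := (measure_mono hs).trans_eq ht.measure_iUnion
    _ ≤ _ := iSup_le fun N =>
      Vitali.measure_le_of_forall_closedBall_le_of_radius_le μ ν fun x hx => hx.2

end Vitali

theorem exists_nat_mem_Ioc_pow {x y : ℝ} (hx : 1 < x) (hy : 1 < y) :
    ∃ k : ℕ, x ∈ Ioc (y ^ k) (y ^ (k + 1)) := by
  obtain ⟨n, hn⟩ := exists_mem_Ioc_zpow (zero_lt_one.trans hx) hy
  have hn0 : 0 ≤ n := by
    by_contra! hneg
    have : y ^ (n + 1) ≤ 1 := zpow_le_one_of_nonpos₀ hy.le (by omega)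
    linarith [hn.2]
  lift n to ℕ using hn0
  exact ⟨n, by simpa [← zpow_natCast] using hn⟩

theorem ofReal_rpow_le_indicator_add {X : Type*} {F : X → ℝ} (hF0 : ∀ x, 0 ≤ F x) {τ : ℝ}
    (hτ : 0 ≤ τ) (t₀ : ℝ) (x : X) :
    ENNReal.ofReal (F x ^ τ) ≤ {y | t₀ < F y}.indicator (fun y => ENNReal.ofReal (F y ^ τ)) x +
      ENNReal.ofReal (t₀ ^ τ) := by
  by_cases hx : x ∈ {y | t₀ < F y}
  · rw [indicator_of_mem hx]
    exact le_self_add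
  · rw [indicator_of_notMem hx, zero_add]
    exact ENNReal.ofReal_le_ofReal (Real.rpow_le_rpow (hF0 x) (not_lt.1 hx) hτ)

theorem setLIntegral_rpow_le_of_forall_mul_measure_le {X : Type*} [MeasurableSpace X]
    {μ : Measure X} {F : X → ℝ} (hF : Measurable F)
    {τ t₀ : ℝ} (hτ0 : 0 < τ) (hτ1 : τ < 1) (ht₀ : 0 < t₀) {S : ℝ≥0∞}
    (hS : ∀ t, t₀ ≤ t → ENNReal.ofReal t * μ {x | t < F x} ≤ S) :
    ∫⁻ x in {x | t₀ < F x}, ENNReal.ofReal (F x ^ τ) ∂μ ≤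
      ENNReal.ofReal (2 ^ τ * t₀ ^ (τ - 1) / (1 - 2 ^ (τ - 1))) * S := by
  set q : ℝ := 2 ^ (τ - 1)
  have hq0 : 0 < q := by positivity
  have hq1 : q < 1 := Real.rpow_lt_one_of_one_lt_of_neg one_lt_two (by linarith)
  set c : ℝ := 2 ^ τ * t₀ ^ (τ - 1)
  let A : ℕ → Set X := fun k => {x | F x ∈ Ioc (2 ^ k * t₀) (2 ^ (k + 1) * t₀)}
  have hcover : {x | t₀ < F x} ⊆ ⋃ k, A k := fun x hx => by
    obtain ⟨k, hk⟩ := exists_nat_mem_Ioc_pow ((one_lt_div ht₀).2 hx) one_lt_two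
    exact mem_iUnion.2 ⟨k, (lt_div_iff₀ ht₀).1 hk.1, (div_le_iff₀ ht₀).1 hk.2⟩
  have hshell : ∀ k : ℕ, ∫⁻ x in A k, ENNReal.ofReal (F x ^ τ) ∂μ ≤
      ENNReal.ofReal c * ENNReal.ofReal q ^ k * S := by
    intro k
    have hs : 0 < (2 : ℝ) ^ k * t₀ := by positivity
    have hpow : ((2 : ℝ) ^ (k + 1) * t₀) ^ τ = c * q ^ k * (2 ^ k * t₀) := calc
      ((2 : ℝ) ^ (k + 1) * t₀) ^ τ = 2 ^ τ * (2 ^ k * t₀) ^ τ := by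
        rw [pow_succ, mul_right_comm, Real.mul_rpow hs.le zero_le_two, mul_comm]
      _ = 2 ^ τ * ((2 ^ k * t₀) ^ (τ - 1) * (2 ^ k * t₀)) := by
        rw [Real.rpow_sub_one hs.ne', div_mul_cancel₀ _ hs.ne']
      _ = c * q ^ k * (2 ^ k * t₀) := by
        rw [Real.mul_rpow (by positivity) ht₀.le, ← Real.rpow_pow_comm zero_le_two]
        ring
    calc ∫⁻ x in A k, ENNReal.ofReal (F x ^ τ) ∂μ
        ≤ ∫⁻ _ in A k, ENNReal.ofReal (((2 : ℝ) ^ (k + 1) * t₀) ^ τ) ∂μ :=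
          setLIntegral_mono' (measurableSet_Ioc.preimage hF) fun x hx =>
            ENNReal.ofReal_le_ofReal (Real.rpow_le_rpow (hs.trans hx.1).le hx.2 hτ0.le)
      _ ≤ ENNReal.ofReal (((2 : ℝ) ^ (k + 1) * t₀) ^ τ) * μ {x | 2 ^ k * t₀ < F x} := by
          rw [setLIntegral_const]
          gcongr
          exact fun x hx => hx.1
      _ = ENNReal.ofReal c * ENNReal.ofReal q ^ k *
            (ENNReal.ofReal (2 ^ k * t₀) * μ {x | 2 ^ k * t₀ < F x}) := by
          rw [hpow, ENNReal.ofReal_mul (by positivity), ENNReal.ofReal_mul (by positivity),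
            ENNReal.ofReal_pow hq0.le, mul_assoc]
      _ ≤ ENNReal.ofReal c * ENNReal.ofReal q ^ k * S := by
          gcongr
          exact hS _ (le_mul_of_one_le_left ht₀.le (one_le_pow₀ one_le_two))
  calc ∫⁻ x in {x | t₀ < F x}, ENNReal.ofReal (F x ^ τ) ∂μ
      ≤ ∑' k, ∫⁻ x in A k, ENNReal.ofReal (F x ^ τ) ∂μ :=
        (lintegral_mono_set hcover).trans (lintegral_iUnion_le _ _)
    _ ≤ ∑' k : ℕ, ENNReal.ofReal c * ENNReal.ofReal q ^ k * S := ENNReal.tsum_le_tsum hshell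
    _ = ENNReal.ofReal (c / (1 - q)) * S := by
        rw [ENNReal.tsum_mul_right, ENNReal.tsum_mul_left, ENNReal.tsum_geometric,
          ← ENNReal.ofReal_one, ← ENNReal.ofReal_sub _ hq0.le,
          ← ENNReal.ofReal_inv_of_pos (by linarith), ← ENNReal.ofReal_mul (by positivity),
          div_eq_mul_inv]

namespace Rough

variable {d : ℕ}

namespace Cube

theorem center_mem (Q : Cube d) : Q.center ∈ Q.carrier := fun i => by
  simp [Q.halfside_pos.le]

theorem closedBall_subset_carrier (Q : Cube d) :
    closedBall Q.center Q.halfside ⊆ Q.carrier := fun y hy i =>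
  (Real.dist_eq (y i) (Q.center i) ▸ PiLp.dist_apply_le y Q.center i).trans (mem_closedBall.1 hy)

theorem carrier_subset_closedBall (Q : Cube d) {x : Ed d} (hx : x ∈ Q.carrier) :
    Q.carrier ⊆ closedBall x ((1 + 2 * √d) * Q.halfside) := by
  intro y hy
  have hcoord : ∀ i, dist (y i) (x i) ^ 2 ≤ (2 * Q.halfside) ^ 2 := fun i => by
    refine pow_le_pow_left₀ dist_nonneg ?_ 2
    rw [Real.dist_eq, two_mul]
    exact (abs_sub_le _ (Q.center i) _).trans (add_le_add (hy i) (abs_sub_comm (x i) _ ▸ hx i))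
  rw [mem_closedBall, EuclideanSpace.dist_eq]
  calc √(∑ i, dist (y i) (x i) ^ 2) ≤ √(d * (2 * Q.halfside) ^ 2) := by
        gcongr
        simpa using Finset.sum_le_sum fun i (_ : i ∈ Finset.univ) => hcoord i
    _ = 2 * √d * Q.halfside := by
        rw [Real.sqrt_mul (Nat.cast_nonneg d), Real.sqrt_sq (by linarith [Q.halfside_pos])]
        ring
    _ ≤ (1 + 2 * √d) * Q.halfside := by nlinarith [Q.halfside_pos]

theorem measurableSet_carrier (Q : Cube d) : MeasurableSet Q.carrier := by
  simp only [Cube.carrier, ofPred_forall]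
  exact .iInter fun i => measurableSet_le (by fun_prop) measurable_const

theorem volume_carrier_pos_s7 (Q : Cube d) : 0 < volume Q.carrier :=
  (measure_closedBall_pos volume Q.center Q.halfside_pos).trans_le
    (measure_mono Q.closedBall_subset_carrier)

theorem volume_carrier_ne_top (Q : Cube d) : volume Q.carrier ≠ ⊤ :=
  ((measure_mono (Q.carrier_subset_closedBall Q.center_mem)).trans_lt
    measure_closedBall_lt_top).ne

end Cube

theorem mul_volume_le_setLIntegral_of_lt_lavg {Q : Cube d} {g : Ed d → ℝ≥0∞} {α : ℝ≥0∞}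
    (h : α < lavg Q g) : α * volume Q.carrier ≤ ∫⁻ x in Q.carrier, g x := by
  rw [lavg, ← ENNReal.div_eq_inv_mul, ENNReal.lt_div_iff_mul_lt (Or.inl Q.volume_carrier_pos_s7.ne')
    (Or.inl Q.volume_carrier_ne_top)] at h
  exact h.le

theorem lavg_add_const (Q : Cube d) (g : Ed d → ℝ≥0∞) (c : ℝ≥0∞) :
    lavg Q (fun y => g y + c) = lavg Q g + c := by
  rw [lavg, lavg, lintegral_add_right _ measurable_const, setLIntegral_const, mul_add,
    ← mul_assoc, mul_comm _ c, mul_assoc,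
    ENNReal.inv_mul_cancel Q.volume_carrier_pos_s7.ne' Q.volume_carrier_ne_top, mul_one]

theorem lavg_mono (Q : Cube d) {g h : Ed d → ℝ≥0∞} (hgh : g ≤ h) : lavg Q g ≤ lavg Q h :=
  mul_le_mul_right (lintegral_mono hgh) _

theorem maximal_le_add_const {g h : Ed d → ℝ≥0∞} {c : ℝ≥0∞} (hgh : ∀ y, g y ≤ h y + c)
    (x : Ed d) : maximal g x ≤ maximal h x + c :=
  iSup₂_le fun Q hxQ => calc
    lavg Q g ≤ lavg Q (fun y => h y + c) := lavg_mono Q hgh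
    _ = lavg Q h + c := lavg_add_const Q h c
    _ ≤ maximal h x + c := by
      gcongr
      exact le_iSup₂ (f := fun Q (_ : x ∈ Q.carrier) => lavg Q h) Q hxQ

theorem volume_lt_maximal_le (g : Ed d → ℝ≥0∞) {α : ℝ≥0∞} (hα : α ≠ 0) :
    volume {x | α < maximal g x} ≤
      ENNReal.ofReal (4 ^ d * (1 + 2 * √d) ^ d) / α * ∫⁻ x, g x := by
  set κ := ENNReal.ofReal ((1 + 2 * √d) ^ d)
  have hball : ∀ x ∈ {x | α < maximal g x}, ∃ r > 0,
      volume (closedBall x r) ≤ κ / α * volume.withDensity g (closedBall x r) := by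
    intro x hx
    obtain ⟨Q, hxQ, hQ⟩ : ∃ Q : Cube d, x ∈ Q.carrier ∧ α < lavg Q g := by
      simpa only [mem_ofPred_eq, maximal, lt_iSup_iff, exists_prop] using hx
    refine ⟨(1 + 2 * √d) * Q.halfside, by positivity [Q.halfside_pos], ?_⟩
    rw [← ENNReal.mul_div_right_comm,
      ENNReal.le_div_iff_mul_le (Or.inl hα) (Or.inl (ne_top_of_lt hQ))]
    calc volume (closedBall x ((1 + 2 * √d) * Q.halfside)) * α
        = κ * (α * volume (closedBall Q.center Q.halfside)) := by
          rw [Measure.addHaar_closedBall_mul volume x (by positivity) Q.halfside_pos.le,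
            Measure.addHaar_closedBall_center volume Q.center, finrank_euclideanSpace_fin]
          ring
      _ ≤ κ * ∫⁻ y in Q.carrier, g y := by
          gcongr
          exact (mul_le_mul_right (measure_mono Q.closedBall_subset_carrier) α).trans
            (mul_volume_le_setLIntegral_of_lt_lavg hQ)
      _ ≤ κ * volume.withDensity g (closedBall x ((1 + 2 * √d) * Q.halfside)) := by
          rw [withDensity_apply _ measurableSet_closedBall]
          gcongr
          exact Q.carrier_subset_closedBall hxQ
  refine (Vitali.measure_le_of_forall_closedBall_le volume _ hball).trans_eq ?_
  rw [withDensity_apply _ MeasurableSet.univ, Measure.restrict_univ, finrank_euclideanSpace_fin,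
    ENNReal.ofReal_mul (by positivity), ENNReal.ofReal_pow (by norm_num), ENNReal.ofReal_ofNat,
    mul_div_assoc]

theorem setOf_add_lt_maximal_subset {g h : Ed d → ℝ≥0∞} {b c : ℝ≥0∞} (hc : c ≠ ⊤)
    (hgh : ∀ y, g y ≤ h y + c) : {x | b + c < maximal g x} ⊆ {x | b < maximal h x} :=
  fun x hx => (ENNReal.add_lt_add_iff_right hc).1 (hx.trans_le (maximal_le_add_const hgh x))

theorem volume_two_mul_rpow_lt_maximal_le {F : Ed d → ℝ} (hF : Measurable F)
    (hF0 : ∀ x, 0 ≤ F x) {τ t₀ : ℝ} (hτ0 : 0 < τ) (hτ1 : τ < 1) (ht₀ : 0 < t₀) :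
    volume {x | ENNReal.ofReal (2 * t₀ ^ τ) < maximal (fun y => ENNReal.ofReal (F y ^ τ)) x} ≤
      ENNReal.ofReal (4 ^ d * (1 + 2 * √d) ^ d * 2 ^ τ / (t₀ * (1 - 2 ^ (τ - 1)))) *
        ⨆ (t : ℝ) (_ : t₀ ≤ t), ENNReal.ofReal t * volume {x | t < F x} := by
  have ht₀τ : 0 < t₀ ^ τ := by positivity
  set g₁ := {y | t₀ < F y}.indicator fun y => ENNReal.ofReal (F y ^ τ)
  have hlevel := setOf_add_lt_maximal_subset (b := ENNReal.ofReal (t₀ ^ τ)) ofReal_ne_top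
    (ofReal_rpow_le_indicator_add hF0 hτ0.le t₀)
  rw [← ENNReal.ofReal_add ht₀τ.le ht₀τ.le, ← two_mul] at hlevel
  calc _ ≤ ENNReal.ofReal (4 ^ d * (1 + 2 * √d) ^ d) / ENNReal.ofReal (t₀ ^ τ) * ∫⁻ x, g₁ x :=
        (measure_mono hlevel).trans (volume_lt_maximal_le g₁ (by positivity))
    _ ≤ ENNReal.ofReal (4 ^ d * (1 + 2 * √d) ^ d) / ENNReal.ofReal (t₀ ^ τ) *
          (ENNReal.ofReal (2 ^ τ * t₀ ^ (τ - 1) / (1 - 2 ^ (τ - 1))) *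
            ⨆ (t : ℝ) (_ : t₀ ≤ t), ENNReal.ofReal t * volume {x | t < F x}) := by
        rw [lintegral_indicator (measurableSet_lt measurable_const hF)]
        gcongr
        exact setLIntegral_rpow_le_of_forall_mul_measure_le hF hτ0 hτ1 ht₀ fun t ht =>
          le_iSup₂ (f := fun t (_ : t₀ ≤ t) => ENNReal.ofReal t * volume {x | t < F x}) t ht
    _ = _ := by
        rw [← mul_assoc, ← ENNReal.ofReal_div_of_pos ht₀τ,
          ← ENNReal.ofReal_mul (by positivity), Real.rpow_sub_one ht₀.ne']
        congr 2
        field_simp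

end Rough

open MeasureTheory ENNReal Rough in
theorem stmt7 (d : ℕ) (τ : ℝ) (hτ0 : 0 < τ) (hτ1 : τ < 1) :
    ∃ C : ℝ, 0 < C ∧
      ∀ F : Ed d → ℝ, Measurable F → (∀ x, 0 ≤ F x) → ∀ lam : ℝ, 0 < lam →
        volume {x | ENNReal.ofReal lam <
            (maximal (fun y => ENNReal.ofReal (F y ^ τ)) x) ^ (1 / τ)} ≤
          ENNReal.ofReal C / ENNReal.ofReal lam *
            ⨆ (t : ℝ) (_ : (2 : ℝ) ^ (-1 / τ) * lam ≤ t),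
              ENNReal.ofReal t * volume {x | t < F x} := by
  have hq1 : (2 : ℝ) ^ (τ - 1) < 1 := Real.rpow_lt_one_of_one_lt_of_neg one_lt_two (by linarith)
  refine ⟨4 ^ d * (1 + 2 * √d) ^ d * 2 ^ τ / (2 ^ (-1 / τ) * (1 - 2 ^ (τ - 1))),
    div_pos (by positivity) (mul_pos (by positivity) (by linarith)), fun F hF hF0 lam hlam => ?_⟩
  have htwo_mul_rpow : 2 * ((2 : ℝ) ^ (-1 / τ) * lam) ^ τ = lam ^ τ := by
    rw [Real.mul_rpow (by positivity) hlam.le, ← Real.rpow_mul zero_le_two,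
      div_mul_cancel₀ _ hτ0.ne', Real.rpow_neg_one, ← mul_assoc, mul_inv_cancel₀ two_ne_zero,
      one_mul]
  have hconst : ENNReal.ofReal (4 ^ d * (1 + 2 * √d) ^ d * 2 ^ τ /
      (2 ^ (-1 / τ) * lam * (1 - 2 ^ (τ - 1)))) =
      ENNReal.ofReal (4 ^ d * (1 + 2 * √d) ^ d * 2 ^ τ / (2 ^ (-1 / τ) * (1 - 2 ^ (τ - 1)))) /
        ENNReal.ofReal lam := by
    rw [← ENNReal.ofReal_div_of_pos hlam, div_div, mul_right_comm _ lam]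
  have hset : {x | ENNReal.ofReal lam < maximal (fun y => ENNReal.ofReal (F y ^ τ)) x ^ (1 / τ)} =
      {x | ENNReal.ofReal (2 * ((2 : ℝ) ^ (-1 / τ) * lam) ^ τ) <
        maximal (fun y => ENNReal.ofReal (F y ^ τ)) x} := by
    ext x
    simp only [mem_ofPred_eq]
    rw [one_div, ENNReal.lt_rpow_inv_iff hτ0, ENNReal.ofReal_rpow_of_pos hlam, htwo_mul_rpow]
  rw [hset, ← hconst]
  exact volume_two_mul_rpow_lt_maximal_le hF hF0 hτ0 hτ1 (by positivity)
end
end
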